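/- arXiv:0808.4122 — 2 statements merged into one kernel-verified Lean document; each statement's English description precedes it below -/
import Mathlib

section
/- DCFL is not contained in REG/n; equivalently, REG/n ≠ DCFL/n. Concretely, there exists a deterministic context-free language (e.g., Equal = {w ∈ {0,1}* : #_0(w) = #_1(w)}) that is not in REG/n. -/
/-- A deterministic pushdown automaton (with ε-moves), with state type `Q`,
input alphabet `α` and stack alphabet `Γ`.  `step q a γ` gives the (unique)
move available in state `q` with top stack symbol `γ` on reading `a` (for
`a = some _`) or spontaneously (for `a = none`); a move replaces the top
stack symbol by a string of stack symbols.  Determinism demands that an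
ε-move excludes reading moves. -/
structure DPDA (α Q Γ : Type) where
  start : Q
  startSym : Γ
  step : Q → Option α → Γ → Option (Q × List Γ)
  final : Set Q
  deterministic : ∀ q γ, (step q none γ).isSome → ∀ a, step q (some a) γ = none

/-- `M.Steps c x c'` : the DPDA `M` can go from configuration `c`
(state, stack) to configuration `c'` while consuming the input string `x`. -/
inductive DPDA.Steps {α Q Γ : Type} (M : DPDA α Q Γ) :
    Q × List Γ → List α → Q × List Γ → Prop
  | refl (c) : DPDA.Steps M c [] c
  | read {q a t s q' u w c} : M.step q (some a) t = some (q', u) →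
      DPDA.Steps M (q', u ++ s) w c → DPDA.Steps M (q, t :: s) (a :: w) c
  | eps {q t s q' u w c} : M.step q none t = some (q', u) →
      DPDA.Steps M (q', u ++ s) w c → DPDA.Steps M (q, t :: s) w c

/-- The language accepted by a DPDA (by final state). -/
def DPDA.accepts {α Q Γ : Type} (M : DPDA α Q Γ) : Language α :=
  { x | ∃ q s, M.Steps (M.start, [M.startSym]) x (q, s) ∧ q ∈ M.final }

/-- A deterministic context-free language: one accepted by a DPDA with
finitely many states and stack symbols. -/
def IsDCFL {σ : Type} (P : Language σ) : Prop :=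
  ∃ (Q Γ : Type) (_ : Fintype Q) (_ : Fintype Γ) (M : DPDA σ Q Γ),
    M.accepts = P

/-- `REG/n`: regular languages with length-respecting advice. -/
def InREGn {σ : Type} (P : Language σ) : Prop :=
  ∃ (Γ : Type) (_ : Fintype Γ) (h : ℕ → List Γ),
    (∀ n, (h n).length = n) ∧
    ∃ L : Language (σ × Γ), L.IsRegular ∧
      ∀ x : List σ, x ∈ P ↔ x.zip (h x.length) ∈ L

/-- `DCFL/n`: deterministic context-free languages with length-respecting
advice. -/
def InDCFLn {σ : Type} (P : Language σ) : Prop :=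
  ∃ (Γ : Type) (_ : Fintype Γ) (h : ℕ → List Γ),
    (∀ n, (h n).length = n) ∧
    ∃ L : Language (σ × Γ), IsDCFL L ∧
      ∀ x : List σ, x ∈ P ↔ x.zip (h x.length) ∈ L

/-!
`Equal` is accepted by a realtime DPDA that keeps the majority letter in its state and its lead,
minus one, in unary on its stack.

It is not in `REG/n`: if a DFA with `N` states decides it with advice, fix the advice `a` for
length `2N`.  Reading the prefixes `0ⁱ1ᴺ⁻ⁱ`, `i ≤ N`, against the first half of `a`, two of them,
`i ≠ j`, lead to the same state; but the suffix `0ᴺ⁻ⁱ1ⁱ` completes only the first one to a word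
of `Equal`.  Since advice can be ignored, `DCFL ⊆ DCFL/n`, which separates `REG/n` from `DCFL/n`.
-/

namespace DPDA

variable {α β Q Γ : Type} {M : DPDA α Q Γ}

def IsRealtime (M : DPDA α Q Γ) : Prop :=
  ∀ q γ, M.step q none γ = none

theorem Steps.append {c c' c'' : Q × List Γ} {x y : List α}
    (h₁ : M.Steps c x c') (h₂ : M.Steps c' y c'') : M.Steps c (x ++ y) c'' := by
  induction h₁ with
  | refl => exact h₂
  | read hstep _ ih => exact .read hstep (ih h₂)
  | eps hstep _ ih => exact .eps hstep (ih h₂)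

theorem IsRealtime.eq_of_steps (hM : M.IsRealtime) {c c₁ c₂ : Q × List Γ} {x : List α}
    (h₁ : M.Steps c x c₁) (h₂ : M.Steps c x c₂) : c₁ = c₂ := by
  induction h₁ with
  | refl => cases h₂ with
    | refl => rfl
    | eps hstep => simp [hM _ _] at hstep
  | read hstep _ ih => cases h₂ with
    | read hstep' h₂ =>
      obtain ⟨rfl, rfl⟩ := Prod.ext_iff.mp (Option.some.inj (hstep.symm.trans hstep'))
      exact ih h₂
    | eps hstep' => simp [hM _ _] at hstep'
  | eps hstep => simp [hM _ _] at hstep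

theorem steps_foldl {S : Type} (f : S → Q × List Γ) (g : S → α → S)
    (hg : ∀ s a, M.Steps (f s) [a] (f (g s a))) (x : List α) (s : S) :
    M.Steps (f s) x (f (x.foldl g s)) := by
  induction x generalizing s with
  | nil => exact .refl _
  | cons a x ih => exact (hg s a).append (ih (g s a))

theorem IsRealtime.accepts_eq_of_simulation (hM : M.IsRealtime) {S : Type}
    (f : S → Q × List Γ) (g : S → α → S) (s₀ : S) (h₀ : f s₀ = (M.start, [M.startSym]))
    (hg : ∀ s a, M.Steps (f s) [a] (f (g s a))) :
    M.accepts = {x | (f (x.foldl g s₀)).1 ∈ M.final} := by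
  ext x
  have hrun := h₀ ▸ steps_foldl f g hg x s₀
  constructor
  · rintro ⟨q, s, hsteps, hq⟩
    change (f _).1 ∈ M.final
    rwa [hM.eq_of_steps hrun hsteps]
  · exact fun hx => ⟨_, _, hrun, hx⟩

def comap (M : DPDA α Q Γ) (f : β → α) : DPDA β Q Γ where
  start := M.start
  startSym := M.startSym
  step q b γ := M.step q (b.map f) γ
  final := M.final
  deterministic q γ h b := M.deterministic q γ h (f b)

theorem steps_comap_iff {f : β → α} {c c' : Q × List Γ} {y : List β} :
    (M.comap f).Steps c y c' ↔ M.Steps c (y.map f) c' := by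
  constructor
  · intro h
    induction h with
    | refl => exact .refl _
    | read hstep _ ih => exact .read hstep ih
    | eps hstep _ ih => exact .eps hstep ih
  · generalize hx : y.map f = x
    intro h
    induction h generalizing y with
    | refl => rw [List.map_eq_nil_iff.mp hx]; exact .refl _
    | read hstep _ ih =>
      obtain ⟨b, y, rfl, rfl, rfl⟩ := List.map_eq_cons_iff.mp hx
      exact .read hstep (ih rfl)
    | eps hstep _ ih => exact .eps hstep (ih hx)

theorem accepts_comap (f : β → α) : (M.comap f).accepts = {y | y.map f ∈ M.accepts} := by
  ext y
  simp only [accepts, steps_comap_iff]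
  rfl

end DPDA

theorem IsDCFL.inDCFLn {σ : Type} {P : Language σ} (hP : IsDCFL P) : InDCFLn P := by
  obtain ⟨Q, Γ, _, _, M, rfl⟩ := hP
  refine ⟨Unit, inferInstance, fun n => List.replicate n (), fun n => List.length_replicate,
    (M.comap Prod.fst).accepts, ⟨Q, Γ, inferInstance, inferInstance, _, rfl⟩, fun x => ?_⟩
  rw [DPDA.accepts_comap]
  change _ ↔ (x.zip _).map Prod.fst ∈ M.accepts
  rw [List.map_fst_zip (by simp)]

/-- The language `Equal` of binary words with as many `0`s (`false`) as `1`s (`true`). -/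
def balanced : Language Bool :=
  {x | x.count false = x.count true}

@[simp]
theorem mem_balanced {x : List Bool} : x ∈ balanced ↔ x.count false = x.count true :=
  Iff.rfl

namespace Balanced

/-- A lead is `none` for a balanced word and `some (b, n)` when `b` occurs `n + 1` times more often
than `!b`; `next c a` is the lead of `w ++ [a]` when `c` is the lead of `w`. -/
def next : Option (Bool × ℕ) → Bool → Option (Bool × ℕ)
  | none, a => some (a, 0)
  | some (b, 0), a => if a = b then some (b, 1) else none
  | some (b, n + 1), a => if a = b then some (b, n + 2) else some (b, n)

def value : Option (Bool × ℕ) → ℤ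
  | none => 0
  | some (b, n) => if b then -(n + 1) else n + 1

theorem value_next (c : Option (Bool × ℕ)) (a : Bool) :
    value (next c a) = value c + if a then -1 else 1 := by
  rcases c with _ | ⟨b, _ | n⟩ <;> cases a <;> try cases b
  all_goals simp [next, value]; try omega

theorem value_foldl_next (x : List Bool) (c : Option (Bool × ℕ)) :
    value (x.foldl next c) = value c + x.count false - x.count true := by
  induction x generalizing c with
  | nil => simp
  | cons a x ih => cases a <;> simp [ih, value_next] <;> ring

theorem value_eq_zero_iff {c : Option (Bool × ℕ)} : value c = 0 ↔ c = none := by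
  rcases c with _ | ⟨_ | _, n⟩ <;> simp [value] <;> omega

theorem foldl_next_eq_none_iff (x : List Bool) :
    x.foldl next none = none ↔ x.count false = x.count true := by
  rw [← value_eq_zero_iff, value_foldl_next]
  simp [value]
  omega

inductive StackSym
  | bottom
  | unit
  deriving DecidableEq

instance : Fintype StackSym :=
  ⟨{StackSym.bottom, StackSym.unit}, fun γ => by cases γ <;> simp⟩

def step : Option Bool → Option Bool → StackSym → Option (Option Bool × List StackSym)
  | none, some a, γ => some (some a, [γ])
  | some b, some a, .bottom =>
    if a = b then some (some b, [.unit, .bottom]) else some (none, [.bottom])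
  | some b, some a, .unit =>
    if a = b then some (some b, [.unit, .unit]) else some (some b, [])
  | _, none, _ => none

def dpda : DPDA Bool (Option Bool) StackSym where
  start := none
  startSym := .bottom
  step := step
  final := {none}
  deterministic q γ h := by cases q <;> cases γ <;> simp [step] at h

theorem isRealtime_dpda : dpda.IsRealtime := by
  intro q γ
  cases q <;> cases γ <;> rfl

def config : Option (Bool × ℕ) → Option Bool × List StackSym
  | none => (none, [.bottom])
  | some (b, n) => (some b, List.replicate n .unit ++ [.bottom])

theorem steps_config_next (c : Option (Bool × ℕ)) (a : Bool) :
    dpda.Steps (config c) [a] (config (next c a)) := by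
  rcases c with _ | ⟨b, _ | n⟩ <;> cases a <;> try cases b
  all_goals exact .read rfl (.refl _)

theorem accepts_dpda : dpda.accepts = balanced := by
  rw [isRealtime_dpda.accepts_eq_of_simulation config next none rfl steps_config_next]
  ext x
  change (config (x.foldl next none)).1 = none ↔ _
  rw [mem_balanced, ← foldl_next_eq_none_iff]
  rcases x.foldl next none with _ | ⟨b, n⟩ <;> simp [config]

end Balanced

theorem isDCFL_balanced : IsDCFL balanced :=
  ⟨_, _, inferInstance, inferInstance, Balanced.dpda, Balanced.accepts_dpda⟩

theorem InREGn.exists_pair_indistinguishable {σ : Type} {P : Language σ} (hP : InREGn P) :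
    ∃ N : ℕ, ∀ (m k : ℕ) (u : Fin (N + 1) → List σ), (∀ i, (u i).length = m) →
      ∃ i j, i ≠ j ∧ ∀ v : List σ, v.length = k → (u i ++ v ∈ P ↔ u j ++ v ∈ P) := by
  obtain ⟨Γ, _, h, hlen, _, ⟨S, _, M, rfl⟩, hP⟩ := hP
  refine ⟨Fintype.card S, fun m k u hu => ?_⟩
  set a := h (m + k)
  have hzip : ∀ i, ∀ v : List σ, v.length = k →
      (u i ++ v).zip (h (u i ++ v).length) = (u i).zip (a.take m) ++ v.zip (a.drop m) := by
    intro i v hv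
    have hsplit : h (u i ++ v).length = a.take m ++ a.drop m := by
      rw [List.take_append_drop, List.length_append, hu, hv]
    rw [hsplit, List.zip_append (by simp [hu, a, hlen])]
  obtain ⟨i, j, hij, hstate⟩ := Fintype.exists_ne_map_eq_of_card_lt
    (fun i => M.eval ((u i).zip (a.take m))) (by simp)
  have hquot : M.accepts.leftQuotient ((u i).zip (a.take m)) =
      M.accepts.leftQuotient ((u j).zip (a.take m)) := by
    simp only [Language.leftQuotient_accepts_apply, hstate]
  refine ⟨i, j, hij, fun v hv => ?_⟩
  rw [hP, hP, hzip i v hv, hzip j v hv, ← Language.mem_leftQuotient, hquot,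
    Language.mem_leftQuotient]

theorem not_inREGn_balanced : ¬ InREGn balanced := by
  intro hP
  obtain ⟨N, hN⟩ := hP.exists_pair_indistinguishable
  obtain ⟨i, j, hij, hsame⟩ :=
    hN N N (fun i => List.replicate i false ++ List.replicate (N - i) true)
      (fun i => by simp; omega)
  have hij' : (i : ℕ) ≠ j := Fin.val_ne_of_ne hij
  have := hsame (List.replicate (N - i) false ++ List.replicate i true) (by simp; omega)
  simp [List.count_replicate] at this
  omega

/-- `DCFL ⊄ REG/n`, hence `REG/n ≠ DCFL/n`.  Concretely, the deterministic
context-free language `Equal = {w ∈ {0,1}* : #₀(w) = #₁(w)}` is not in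
`REG/n`. -/
theorem dcfl_not_subset_REGn :
    (∃ P : Language Bool, IsDCFL P ∧ ¬ InREGn P) ∧
    (IsDCFL { x : List Bool | x.count false = x.count true } ∧
      ¬ InREGn { x : List Bool | x.count false = x.count true }) ∧
    ¬ (∀ P : Language Bool, InREGn P ↔ InDCFLn P) :=
  ⟨⟨balanced, isDCFL_balanced, not_inREGn_balanced⟩, ⟨isDCFL_balanced, not_inREGn_balanced⟩,
    fun h => not_inREGn_balanced ((h balanced).2 isDCFL_balanced.inDCFLn)⟩
end

section
/- The language Dup = {ww : w ∈ {0,1}*} is not in CFL/n; i.e., there do not exist an advice function h with |h(n)| = n and a context-free language L over a track alphabet such that for all x ∈ {0,1}*, x ∈ Dup iff ⟨x, h(|x|)⟩ ∈ L. In particular, Dup is not context-free. -/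
/-!
Suppose a grammar `g` whose rules have outputs of length at most `r` accepts exactly the track
words `⟨x, h(|x|)⟩` with `x ∈ Dup`. For `|w| = k`, a parse tree of `⟨ww, h(2k)⟩` has a subtree
spanning a block of length `ℓ` with `k / r < ℓ ≤ k`. Exchanging the subtrees of two such words
that are rooted at the same rule and span the same block keeps the advice track, so the result
is accepted and its upper track is a square; hence the two words agree on the `ℓ` positions of
the block folded modulo `k`. There are at most `|rules| · (2k + 1)²` such classes, each with at
most `2 ^ (k - k / r - 1)` words, which is fewer than `2 ^ k` words in all once `k` is large.
A context-free language lies in `CFL/n` with trivial advice.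
-/

/-- A language `P` over `σ` is in `CFL/n` if there are a finite advice
alphabet `Γ`, an advice function `h : ℕ → Γ*` with `|h n| = n`, and a
context-free language `L` over the track alphabet `σ × Γ` such that `x ∈ P`
iff the track string `⟨x, h(|x|)⟩` belongs to `L`. -/
def InCFLn {σ : Type} (P : Language σ) : Prop :=
  ∃ (Γ : Type) (_ : Fintype Γ) (h : ℕ → List Γ),
    (∀ n, (h n).length = n) ∧
    ∃ L : Language (σ × Γ), L.IsContextFree ∧
      ∀ x : List σ, x ∈ P ↔ x.zip (h x.length) ∈ L

namespace ContextFreeGrammar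

variable {T : Type*} {g : ContextFreeGrammar T}

/-- Parse forests: the symbols `σs` are the roots of parse trees whose leaves spell `w`. Unlike
`Derives`, this admits structural induction over subtrees. -/
inductive Yields (g : ContextFreeGrammar T) : List (Symbol T g.NT) → List T → Prop
  | nil : g.Yields [] []
  | terminal (t : T) {σs : List (Symbol T g.NT)} {w : List T} :
      g.Yields σs w → g.Yields (Symbol.terminal t :: σs) (t :: w)
  | nonterminal {ρ : ContextFreeRule T g.NT} (hρ : ρ ∈ g.rules) {σs : List (Symbol T g.NT)}
      {u w : List T} :
      g.Yields ρ.output u → g.Yields σs w → g.Yields (Symbol.nonterminal ρ.input :: σs) (u ++ w)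

lemma yields_map_terminal (w : List T) : g.Yields (w.map Symbol.terminal) w := by
  induction w with
  | nil => exact .nil
  | cons t w ih => exact .terminal t ih

lemma Yields.exists_of_append {α β : List (Symbol T g.NT)} {w : List T}
    (h : g.Yields (α ++ β) w) : ∃ w₁ w₂, w = w₁ ++ w₂ ∧ g.Yields α w₁ ∧ g.Yields β w₂ := by
  induction α generalizing w with
  | nil => exact ⟨[], w, rfl, .nil, h⟩
  | cons s α ih =>
    cases h with
    | terminal t h =>
      obtain ⟨w₁, w₂, rfl, h₁, h₂⟩ := ih h
      exact ⟨t :: w₁, w₂, rfl, .terminal t h₁, h₂⟩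
    | nonterminal hρ hu h =>
      obtain ⟨w₁, w₂, rfl, h₁, h₂⟩ := ih h
      exact ⟨_ ++ w₁, w₂, by simp, .nonterminal hρ hu h₁, h₂⟩

lemma Yields.of_rewrites {ρ : ContextFreeRule T g.NT} (hρ : ρ ∈ g.rules)
    {σs σs' : List (Symbol T g.NT)} (hσ : ρ.Rewrites σs σs') {w : List T} (h : g.Yields σs' w) :
    g.Yields σs w := by
  induction hσ generalizing w with
  | head s =>
    obtain ⟨w₁, w₂, rfl, h₁, h₂⟩ := h.exists_of_append
    exact .nonterminal hρ h₁ h₂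
  | cons x _ ih =>
    cases h with
    | terminal t h => exact .terminal t (ih h)
    | nonterminal hρ' hu h => exact .nonterminal hρ' hu (ih h)

lemma Yields.derives {σs : List (Symbol T g.NT)} {w : List T} (h : g.Yields σs w) :
    g.Derives σs (w.map Symbol.terminal) := by
  induction h with
  | nil => rfl
  | terminal t _ ih => exact ih.append_left [Symbol.terminal t]
  | nonterminal hρ _ _ ihu ihσ =>
    refine Produces.trans_derives ⟨_, hρ, .head _⟩ ?_
    simpa using (ihu.append_right _).trans (ihσ.append_left _)

theorem derives_map_terminal_iff_yields {σs : List (Symbol T g.NT)} {w : List T} :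
    g.Derives σs (w.map Symbol.terminal) ↔ g.Yields σs w := by
  refine ⟨fun h => ?_, Yields.derives⟩
  induction h using Relation.ReflTransGen.head_induction_on with
  | refl => exact yields_map_terminal w
  | head hstep _ ih =>
    obtain ⟨ρ, hρ, hσ⟩ := hstep
    exact ih.of_rewrites hρ hσ

def DerivesThrough (g : ContextFreeGrammar T) (σs : List (Symbol T g.NT)) (A : g.NT)
    (u₁ u₂ u₃ : List T) : Prop :=
  g.Derives σs (u₁.map Symbol.terminal ++ Symbol.nonterminal A :: u₃.map Symbol.terminal) ∧
    g.Derives [Symbol.nonterminal A] (u₂.map Symbol.terminal)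

lemma DerivesThrough.cons {σs : List (Symbol T g.NT)} {A : g.NT} {u₁ u₂ u₃ : List T}
    (h : g.DerivesThrough σs A u₁ u₂ u₃) (t : T) :
    g.DerivesThrough (Symbol.terminal t :: σs) A (t :: u₁) u₂ u₃ :=
  ⟨h.1.append_left [Symbol.terminal t], h.2⟩

lemma DerivesThrough.swap_mem_language {A : g.NT} {u₁ u₂ u₃ u₁' u₂' u₃' : List T}
    (h : g.DerivesThrough [Symbol.nonterminal g.initial] A u₁ u₂ u₃)
    (h' : g.DerivesThrough [Symbol.nonterminal g.initial] A u₁' u₂' u₃') :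
    u₁ ++ u₂' ++ u₃ ∈ g.language := by
  simpa [mem_language_iff] using h.1.trans ((h'.2.append_right _).append_left _)

/-- Unless the frontier averages at most `M / r` leaves per root, descend from a root with more
than `M / r` leaves: a subtree with more than `M` leaves has at most `r` children, one of which
has more than `M / r` leaves. -/
theorem Yields.exists_derivesThrough {r M : ℕ} (hr : ∀ ρ ∈ g.rules, ρ.output.length ≤ r)
    (hrM : r ≤ M) {σs : List (Symbol T g.NT)} {w : List T} (h : g.Yields σs w) :
    r * w.length ≤ σs.length * M ∨ ∃ ρ ∈ g.rules, ∃ u₁ u₂ u₃ : List T, w = u₁ ++ u₂ ++ u₃ ∧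
      M < r * u₂.length ∧ u₂.length ≤ M ∧ g.DerivesThrough σs ρ.input u₁ u₂ u₃ := by
  induction h with
  | nil => simp
  | terminal t _ ih =>
    rcases ih with hle | ⟨ρ, hρ, u₁, u₂, u₃, rfl, hlong, hshort, hthr⟩
    · left
      simp only [List.length_cons, mul_add, add_mul]
      linarith
    · exact Or.inr ⟨ρ, hρ, t :: u₁, u₂, u₃, rfl, hlong, hshort, hthr.cons t⟩
  | @nonterminal ρ hρ σs u w hu hw ihu ihw =>
    have hstep : g.Produces (Symbol.nonterminal ρ.input :: σs) (ρ.output ++ σs) :=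
      ⟨ρ, hρ, .head σs⟩
    rcases ihu with hle | ⟨ρ', hρ', u₁, u₂, u₃, rfl, hlong, hshort, hthr⟩
    · by_cases hbig : M < r * u.length
      · refine Or.inr ⟨ρ, hρ, [], u, w, rfl, hbig, ?_, ?_,
          Produces.trans_derives ⟨ρ, hρ, .input_output⟩ hu.derives⟩
        · have hr₀ : 0 < r := Nat.pos_of_ne_zero (by rintro rfl; simp at hbig)
          exact Nat.le_of_mul_le_mul_left (hle.trans (Nat.mul_le_mul_right M (hr ρ hρ))) hr₀
        · simpa using hw.derives.append_left [Symbol.nonterminal ρ.input]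
      rcases ihw with hle' | ⟨ρ', hρ', u₁, u₂, u₃, rfl, hlong, hshort, hthr⟩
      · left
        simp only [List.length_cons, List.length_append, mul_add, add_mul]
        linarith
      · refine Or.inr ⟨ρ', hρ', u ++ u₁, u₂, u₃, by simp, hlong, hshort, ?_, hthr.2⟩
        simpa using hstep.trans_derives ((hu.derives.append_right σs).trans
          (hthr.1.append_left (u.map Symbol.terminal)))
    · refine Or.inr ⟨ρ', hρ', u₁, u₂, u₃ ++ w, by simp, hlong, hshort, ?_, hthr.2⟩
      simpa using hstep.trans_derives ((hthr.1.append_right σs).trans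
        (hw.derives.append_left _))

theorem exists_derivesThrough_of_mem_language {r M : ℕ} (hr₀ : 0 < r)
    (hr : ∀ ρ ∈ g.rules, ρ.output.length ≤ r) (hrM : r ≤ M) {w : List T} (hw : w ∈ g.language)
    (hM : M < w.length) : ∃ ρ ∈ g.rules, ∃ u₁ u₂ u₃ : List T, w = u₁ ++ u₂ ++ u₃ ∧
      M < r * u₂.length ∧ u₂.length ≤ M ∧
      g.DerivesThrough [Symbol.nonterminal g.initial] ρ.input u₁ u₂ u₃ := by
  rw [mem_language_iff, derives_map_terminal_iff_yields] at hw
  refine (hw.exists_derivesThrough hr hrM).resolve_left fun hle => ?_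
  rw [List.length_singleton, one_mul] at hle
  nlinarith

end ContextFreeGrammar

section Map

variable {T T' N : Type*} (f : T → T')

def Symbol.mapTerminal : Symbol T N → Symbol T' N
  | .terminal t => .terminal (f t)
  | .nonterminal A => .nonterminal A

@[simp] lemma Symbol.mapTerminal_terminal (t : T) :
    (Symbol.terminal t : Symbol T N).mapTerminal f = .terminal (f t) := rfl

@[simp] lemma Symbol.mapTerminal_nonterminal (A : N) :
    (Symbol.nonterminal A : Symbol T N).mapTerminal f = .nonterminal A := rfl

@[simp] lemma Symbol.mapTerminal_eq_nonterminal_iff {s : Symbol T N} {A : N} :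
    s.mapTerminal f = .nonterminal A ↔ s = .nonterminal A := by
  cases s <;> simp

lemma List.exists_map_terminal_of_map_mapTerminal_eq {v : List (Symbol T N)} {w' : List T'}
    (h : v.map (Symbol.mapTerminal f) = w'.map Symbol.terminal) :
    ∃ w : List T, v = w.map Symbol.terminal ∧ w.map f = w' := by
  induction w' generalizing v with
  | nil => exact ⟨[], by simpa using h, rfl⟩
  | cons t' w' ih =>
    obtain ⟨s, v, rfl, hs, hv⟩ := List.map_eq_cons_iff.mp h
    obtain ⟨w, rfl, rfl⟩ := ih hv
    cases s with
    | terminal t => exact ⟨t :: w, rfl, by simpa using hs⟩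
    | nonterminal A => simp at hs

@[simps]
def ContextFreeRule.map (ρ : ContextFreeRule T N) : ContextFreeRule T' N :=
  ⟨ρ.input, ρ.output.map (Symbol.mapTerminal f)⟩

lemma ContextFreeRule.Rewrites.map {ρ : ContextFreeRule T N} {u v : List (Symbol T N)}
    (h : ρ.Rewrites u v) :
    (ρ.map f).Rewrites (u.map (Symbol.mapTerminal f)) (v.map (Symbol.mapTerminal f)) := by
  induction h with
  | head s => simpa using ContextFreeRule.Rewrites.head (r := ρ.map f) (s.map _)
  | cons x _ ih => exact .cons _ ih

lemma ContextFreeRule.Rewrites.exists_of_map {ρ : ContextFreeRule T N}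
    {u' v' : List (Symbol T' N)} (h : (ρ.map f).Rewrites u' v') {u : List (Symbol T N)}
    (hu : u.map (Symbol.mapTerminal f) = u') :
    ∃ v, ρ.Rewrites u v ∧ v.map (Symbol.mapTerminal f) = v' := by
  induction h generalizing u with
  | head s =>
    obtain ⟨s₀, u, rfl, hs₀, rfl⟩ := List.map_eq_cons_iff.mp hu
    obtain rfl := (Symbol.mapTerminal_eq_nonterminal_iff f).mp hs₀
    exact ⟨ρ.output ++ u, .head u, by simp⟩
  | cons x _ ih =>
    obtain ⟨s₀, u₀, rfl, rfl, hu₀⟩ := List.map_eq_cons_iff.mp hu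
    obtain ⟨v, hv, rfl⟩ := ih hu₀
    exact ⟨s₀ :: v, .cons s₀ hv, rfl⟩

namespace ContextFreeGrammar

open Classical in
noncomputable def map (g : ContextFreeGrammar T) : ContextFreeGrammar T' :=
  ⟨g.NT, g.initial, g.rules.image (ContextFreeRule.map f)⟩

variable {f} {g : ContextFreeGrammar T}

lemma Derives.map {u v : List (Symbol T g.NT)} (h : g.Derives u v) :
    (g.map f).Derives (u.map (Symbol.mapTerminal f)) (v.map (Symbol.mapTerminal f)) := by
  induction h with
  | refl => rfl
  | tail _ hstep ih =>
    classical
    obtain ⟨ρ, hρ, hρuv⟩ := hstep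
    exact ih.tail ⟨ρ.map f, Finset.mem_image_of_mem _ hρ, hρuv.map f⟩

lemma Derives.exists_of_map {u : List (Symbol T g.NT)} {v' : List (Symbol T' g.NT)}
    (h : (g.map f).Derives (u.map (Symbol.mapTerminal f)) v') :
    ∃ v, g.Derives u v ∧ v.map (Symbol.mapTerminal f) = v' := by
  induction h with
  | refl => exact ⟨u, Relation.ReflTransGen.refl, rfl⟩
  | tail _ hstep ih =>
    classical
    obtain ⟨v, huv, rfl⟩ := ih
    obtain ⟨ρ', hρ', hρv⟩ := hstep
    obtain ⟨ρ, hρ, rfl⟩ := Finset.mem_image.mp hρ'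
    obtain ⟨w, hvw, rfl⟩ := hρv.exists_of_map f rfl
    exact ⟨w, huv.tail ⟨ρ, hρ, hvw⟩, rfl⟩

theorem language_map : (g.map f).language = Language.map f g.language := by
  ext w'
  constructor
  · intro hw'
    obtain ⟨v, hv, hvw'⟩ := Derives.exists_of_map (u := [Symbol.nonterminal g.initial]) hw'
    obtain ⟨w, rfl, rfl⟩ := List.exists_map_terminal_of_map_mapTerminal_eq f hvw'
    exact ⟨w, hv, rfl⟩
  · rintro ⟨w, hw, rfl⟩
    simpa [mem_language_iff, Function.comp_def, map] using hw.map (f := f)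

end ContextFreeGrammar

theorem Language.IsContextFree.map {L : Language T} (hL : L.IsContextFree) :
    (Language.map f L).IsContextFree := by
  obtain ⟨g, rfl⟩ := hL
  exact ⟨g.map f, g.language_map⟩

end Map

theorem Language.IsContextFree.inCFLn {σ : Type} {P : Language σ} (hP : P.IsContextFree) :
    InCFLn P := by
  refine ⟨Unit, inferInstance, fun n => List.replicate n (), fun n => List.length_replicate, _,
    hP.map (·, ()), fun x => ?_⟩
  have hzip : x.zip (List.replicate x.length ()) = x.map (·, ()) := by
    induction x <;> simp [*, List.replicate_succ]
  rw [hzip]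
  exact ((List.map_injective_iff.mpr fun _ _ h => (Prod.mk.inj h).1).mem_set_image).symm

namespace List

variable {α : Type*}

lemma getElem?_append_self {u : List α} {q : ℕ} (hq : q < 2 * u.length) :
    (u ++ u)[q]? = u[q % u.length]? := by
  rcases lt_or_ge q u.length with h | h
  · rw [getElem?_append_left h, Nat.mod_eq_of_lt h]
  · rw [getElem?_append_right h, Nat.mod_eq_sub_mod h, Nat.mod_eq_of_lt (by omega)]

lemma map_splice_eq_map {β : Type*} (φ : α → β) {z z' u₁ u₂ u₃ u₁' u₂' u₃' : List α}
    (hz : z = u₁ ++ u₂ ++ u₃) (hz' : z' = u₁' ++ u₂' ++ u₃') (h₁ : u₁.length = u₁'.length)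
    (h₂ : u₂.length = u₂'.length) (hφ : z.map φ = z'.map φ) :
    (u₁ ++ u₂' ++ u₃).map φ = z.map φ := by
  subst hz hz'
  simp only [map_append] at hφ ⊢
  obtain ⟨h12, -⟩ := append_inj hφ (by simp [h₁, h₂])
  rw [(append_inj h12 (by simp [h₁])).2]

variable {p₁ p₂ p₃ p₁' p₂' p₃' : List α} {q : ℕ}

lemma getElem?_splice_inside (h₁ : p₁.length = p₁'.length) (hq : p₁.length ≤ q)
    (hq' : q < p₁.length + p₂'.length) :
    (p₁ ++ p₂' ++ p₃)[q]? = (p₁' ++ p₂' ++ p₃')[q]? := by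
  simp only [append_assoc, getElem?_append_right, hq, h₁ ▸ hq]
  rw [getElem?_append_left (by omega), getElem?_append_left (by omega), h₁]

lemma getElem?_splice_outside (h₂ : p₂.length = p₂'.length)
    (hq : q < p₁.length ∨ p₁.length + p₂.length ≤ q) :
    (p₁ ++ p₂' ++ p₃)[q]? = (p₁ ++ p₂ ++ p₃)[q]? := by
  rcases hq with hq | hq
  · simp only [append_assoc, getElem?_append_left hq]
  · rw [getElem?_append_right (by simp; omega), getElem?_append_right (by simp; omega)]
    simp [h₂]

theorem getElem?_mod_eq_of_splice_eq_append_self {w w' v : List α}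
    (hw : w ++ w = p₁ ++ p₂ ++ p₃) (hw' : w' ++ w' = p₁' ++ p₂' ++ p₃')
    (h₁ : p₁.length = p₁'.length) (h₂ : p₂.length = p₂'.length) (hlen : w.length = w'.length)
    (hshort : p₂.length ≤ w.length) (hv : p₁ ++ p₂' ++ p₃ = v ++ v)
    (hq : p₁.length ≤ q) (hq' : q < p₁.length + p₂.length) :
    w[q % w.length]? = w'[q % w.length]? := by
  set k := w.length
  have hw2 := congrArg length hw
  have hv2 := congrArg length hv
  simp only [length_append] at hw2 hv2
  have hvk : v.length = k := by omega
  -- the position `q'` in the other half of the square lies outside the block since `|p₂| ≤ k`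
  set q' := if q < k then q + k else q - k
  have hq'k : q' % k = q % k := by
    simp only [q']
    split_ifs with h
    · exact Nat.add_mod_right q k
    · exact (Nat.mod_eq_sub_mod (by omega)).symm
  have hq'2 : q' < 2 * k := by simp only [q']; split_ifs <;> omega
  calc w[q % k]? = (p₁ ++ p₂ ++ p₃)[q']? := by rw [← hw, getElem?_append_self hq'2, hq'k]
    _ = (v ++ v)[q']? := by
      rw [← hv, getElem?_splice_outside h₂ (by simp only [q']; split_ifs <;> omega)]
    _ = (v ++ v)[q]? := by
      rw [getElem?_append_self (by omega), getElem?_append_self (by omega), hvk, hq'k]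
    _ = (p₁' ++ p₂' ++ p₃')[q]? := by rw [← hv, getElem?_splice_inside h₁ hq (by omega)]
    _ = w'[q % k]? := by rw [← hw', getElem?_append_self (by omega), hlen]

end List

open Finset ContextFreeGrammar

lemma exists_mul_sq_lt_two_pow (c a : ℕ) : ∃ K, 0 < K ∧ c * (a * K + 1) ^ 2 < 2 ^ K := by
  set m := 9 * c * (a + 1) ^ 2 + 1
  refine ⟨3 * m, by omega, ?_⟩
  have hm : 1 ≤ m := by omega
  calc c * (a * (3 * m) + 1) ^ 2 ≤ c * (3 * (a + 1) * m) ^ 2 := by gcongr; nlinarith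
    _ = 9 * c * (a + 1) ^ 2 * m ^ 2 := by ring
    _ < m * m ^ 2 := by gcongr; omega
    _ = m ^ 3 := by ring
    _ < (2 ^ m) ^ 3 := by gcongr; exact Nat.lt_two_pow_self
    _ = 2 ^ (3 * m) := by rw [← pow_mul, mul_comm]

lemma Finset.card_le_pow_of_eqOn {ι α : Type*} [Fintype ι] [DecidableEq ι] [Fintype α]
    {F : Finset (ι → α)} {H : Finset ι} (hF : ∀ f ∈ F, ∀ f' ∈ F, Set.EqOn f f' H) :
    #F ≤ Fintype.card α ^ (Fintype.card ι - #H) := by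
  have hinj : Set.InjOn (fun (f : ι → α) (p : ↥Hᶜ) => f p) F := fun f hf f' hf' hff' =>
    funext fun p => by
      by_cases hp : p ∈ H
      · exact hF f hf f' hf' hp
      · exact congrFun hff' ⟨p, mem_compl.mpr hp⟩
  calc #F ≤ #(univ : Finset (↥Hᶜ → α)) :=
        card_le_card_of_injOn _ (fun _ _ => mem_coe.mpr (mem_univ _)) hinj
    _ = _ := by simp

lemma Fintype.pow_le_card_of_forall_eqOn {ι α β : Type*} [Fintype ι] [DecidableEq ι]
    [Fintype α] [Nonempty α] [DecidableEq β] (τ : (ι → α) → β) {t : Finset β}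
    (hτ : ∀ f, τ f ∈ t) (H : β → Finset ι) {m : ℕ} (hmι : m ≤ Fintype.card ι)
    (hm : ∀ f, m ≤ #(H (τ f))) (hH : ∀ f f', τ f = τ f' → Set.EqOn f f' (H (τ f))) :
    Fintype.card α ^ m ≤ #t := by
  have hcount : #(univ : Finset (ι → α)) ≤ Fintype.card α ^ (Fintype.card ι - m) * #t := by
    refine card_le_mul_card_image_of_maps_to (fun f _ => hτ f) _ fun b _ => ?_
    rcases (univ.filter (τ · = b)).eq_empty_or_nonempty with he | ⟨f₀, hf₀⟩
    · simp [he]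
    obtain rfl := (mem_filter.mp hf₀).2
    refine (card_le_pow_of_eqOn (H := H (τ f₀)) fun f hf f' hf' => ?_).trans
      (Nat.pow_le_pow_right Fintype.card_pos (by have := hm f₀; omega))
    rw [(mem_filter.mp hf).2.symm]
    exact hH f f' ((mem_filter.mp hf).2.trans (mem_filter.mp hf').2.symm)
  rw [card_univ, Fintype.card_fun, ← Nat.sub_add_cancel hmι, pow_add, Nat.sub_add_cancel hmι]
    at hcount
  exact Nat.le_of_mul_le_mul_left hcount (pow_pos Fintype.card_pos _)

lemma le_card_filter_exists_mod_eq {k i ℓ : ℕ} (hℓ : ℓ ≤ k) :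
    ℓ ≤ #{p : Fin k | ∃ q ∈ Ico i (i + ℓ), q % k = p} := by
  calc ℓ = #((Ico i (i + ℓ)).image (· % k)) := by
        rw [card_image_of_injOn ((Nat.mod_injOn_Ico i k).mono
          (coe_subset.mpr (Ico_subset_Ico_right (by omega))))]
        simp
    _ ≤ #(({p : Fin k | ∃ q ∈ Ico i (i + ℓ), q % k = p} : Finset (Fin k)).map
          Fin.valEmbedding) := by
        refine card_le_card fun x hx => ?_
        obtain ⟨q, hq, rfl⟩ := mem_image.mp hx
        have hk : 0 < k := by simp at hq; omega
        exact mem_map.mpr ⟨⟨q % k, Nat.mod_lt q hk⟩, by simpa using ⟨q, mem_Ico.mp hq, rfl⟩, rfl⟩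
    _ = _ := card_map _

/-- Exchanging the subtrees keeps the lower track, so the upper track of the result is a
square. -/
theorem getElem?_mod_eq_of_derivesThrough {α Γ : Type*} {g : ContextFreeGrammar (α × Γ)}
    {a : List Γ} (hsq : ∀ z ∈ g.language, z.map Prod.snd = a → ∃ v, z.map Prod.fst = v ++ v)
    {w w' : List α} (hlen : w.length = w'.length) (ha : a.length = 2 * w.length) {A : g.NT}
    {u₁ u₂ u₃ u₁' u₂' u₃' : List (α × Γ)}
    (hz : (w ++ w).zip a = u₁ ++ u₂ ++ u₃) (hz' : (w' ++ w').zip a = u₁' ++ u₂' ++ u₃')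
    (h : g.DerivesThrough [Symbol.nonterminal g.initial] A u₁ u₂ u₃)
    (h' : g.DerivesThrough [Symbol.nonterminal g.initial] A u₁' u₂' u₃')
    (h₁ : u₁.length = u₁'.length) (h₂ : u₂.length = u₂'.length) (hshort : u₂.length ≤ w.length)
    {q : ℕ} (hq : u₁.length ≤ q) (hq' : q < u₁.length + u₂.length) :
    w[q % w.length]? = w'[q % w.length]? := by
  have hfst : w ++ w = u₁.map Prod.fst ++ u₂.map Prod.fst ++ u₃.map Prod.fst := by
    rw [← List.map_append, ← List.map_append, ← hz, List.map_fst_zip (by simp; omega)]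
  have hfst' : w' ++ w' = u₁'.map Prod.fst ++ u₂'.map Prod.fst ++ u₃'.map Prod.fst := by
    rw [← List.map_append, ← List.map_append, ← hz', List.map_fst_zip (by simp; omega)]
  have hsnd := List.map_splice_eq_map Prod.snd hz hz' h₁ h₂ (by
    rw [List.map_snd_zip (by simp; omega), List.map_snd_zip (by simp; omega)])
  obtain ⟨v, hv⟩ := hsq _ (h.swap_mem_language h')
    (by rw [hsnd, List.map_snd_zip (by simp; omega)])
  simp only [List.map_append] at hv
  exact List.getElem?_mod_eq_of_splice_eq_append_self hfst hfst' (by simpa) (by simpa) hlen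
    (by simpa) hv (by simpa) (by simpa)

theorem two_pow_le_card_rules_mul {Γ : Type} (g : ContextFreeGrammar (Bool × Γ)) {r k : ℕ}
    (hr₂ : 2 ≤ r) (hr : ∀ ρ ∈ g.rules, ρ.output.length ≤ r) (hrk : r ≤ k) {a : List Γ}
    (ha : a.length = 2 * k)
    (hdup : ∀ x : List Bool, x.length = 2 * k → ((∃ v, x = v ++ v) ↔ x.zip a ∈ g.language)) :
    2 ^ (k / r + 1) ≤ #g.rules * (2 * k + 1) ^ 2 := by
  classical
  have hk : 0 < k := by omega
  have hsq : ∀ z ∈ g.language, z.map Prod.snd = a → ∃ v, z.map Prod.fst = v ++ v :=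
    fun z hz hza => (hdup _ (by rw [List.length_map, ← ha, ← hza, List.length_map])).mpr
      (List.zip_of_prod rfl hza ▸ hz)
  have hsplit (w : Fin k → Bool) : ∃ ρ ∈ g.rules, ∃ u₁ u₂ u₃,
      (List.ofFn w ++ List.ofFn w).zip a = u₁ ++ u₂ ++ u₃ ∧ k < r * u₂.length ∧
        u₂.length ≤ k ∧ g.DerivesThrough [Symbol.nonterminal g.initial] ρ.input u₁ u₂ u₃ :=
    exists_derivesThrough_of_mem_language (by omega) hr hrk
      ((hdup _ (by simp; omega)).mp ⟨_, rfl⟩) (by simp [ha]; omega)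
  choose ρ hρ u₁ u₂ u₃ hz hlong hshort hthr using hsplit
  have hagree (w w' : Fin k → Bool) (hρ' : ρ w = ρ w') (h₁ : (u₁ w).length = (u₁ w').length)
      (h₂ : (u₂ w).length = (u₂ w').length) (q : ℕ) (hq : (u₁ w).length ≤ q)
      (hq' : q < (u₁ w).length + (u₂ w).length) :
      w ⟨q % k, Nat.mod_lt q hk⟩ = w' ⟨q % k, Nat.mod_lt q hk⟩ := by
    have := getElem?_mod_eq_of_derivesThrough hsq (by simp) (by simp [ha]) (hz w) (hz w')
      (hthr w) (hρ' ▸ hthr w') h₁ h₂ (by simpa using hshort w) hq hq'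
    simpa [List.getElem?_ofFn, Nat.mod_lt q hk] using this
  have hmk : k / r + 1 ≤ k := by
    have := Nat.div_le_div_left hr₂ (by omega : 0 < 2) (a := k)
    omega
  have key := Fintype.pow_le_card_of_forall_eqOn
    (fun w => (ρ w, (u₁ w).length, (u₂ w).length))
    (t := g.rules ×ˢ range (2 * k + 1) ×ˢ range (2 * k + 1))
    (fun w => by
      have := congrArg List.length (hz w)
      simp [hρ] at this ⊢
      omega)
    (fun τ => {p : Fin k | ∃ q ∈ Ico τ.2.1 (τ.2.1 + τ.2.2), q % k = p})
    (by simpa using hmk)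
    (fun w => (le_card_filter_exists_mod_eq (hshort w)).trans'
      ((Nat.div_lt_iff_lt_mul (by omega)).mpr (by linarith [hlong w])))
    (fun w w' hτ p hp => by
      simp only [Prod.mk.injEq] at hτ
      obtain ⟨q, hq, hqp⟩ := (mem_filter.mp hp).2
      rw [show p = ⟨q % k, Nat.mod_lt q hk⟩ from Fin.ext hqp.symm]
      exact hagree w w' hτ.1 hτ.2.1 hτ.2.2 q (mem_Ico.mp hq).1 (mem_Ico.mp hq).2)
  simpa [card_product, sq] using key

theorem not_inCFLn_dup : ¬ InCFLn { x : List Bool | ∃ w : List Bool, x = w ++ w } := by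
  rintro ⟨Γ, _, h, hlen, _, ⟨g, rfl⟩, hdup⟩
  obtain ⟨r, hr₂, hr⟩ : ∃ r, 2 ≤ r ∧ ∀ ρ ∈ g.rules, ρ.output.length ≤ r :=
    ⟨g.rules.sup (·.output.length) + 2, by omega,
      fun ρ hρ => (le_sup (f := (·.output.length)) hρ).trans (by omega)⟩
  obtain ⟨K, hK₀, hK⟩ := exists_mul_sq_lt_two_pow #g.rules (2 * r)
  have key := two_pow_le_card_rules_mul g hr₂ hr (k := r * K) (by nlinarith) (hlen _)
    fun x hx => hx ▸ hdup x
  rw [Nat.mul_div_cancel_left K (by omega), ← mul_assoc, pow_succ] at key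
  omega

/-- The language `Dup = {ww : w ∈ {0,1}*}` is not in `CFL/n`; in particular
it is not context-free. -/
theorem dup_not_in_CFLn :
    ¬ InCFLn { x : List Bool | ∃ w : List Bool, x = w ++ w } ∧
    ¬ Language.IsContextFree { x : List Bool | ∃ w : List Bool, x = w ++ w } :=
  ⟨not_inCFLn_dup, fun h => not_inCFLn_dup h.inCFLn⟩
end
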